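/- For any real m×n matrix X and any matrix G of the form G = U·sign(Σ)·Vᵀ where X = UΣVᵀ is a compact SVD, G is a subgradient of the nuclear norm at X: for all Y, ‖Y‖_* ≥ ‖X‖_* + ⟨G, Y − X⟩. -/

import Mathlib

/-!
The nuclear norm is dual to the spectral norm: for an orthonormal eigenbasis `(bⱼ)` of `AᵀA` one
has `⟨H, A⟩ = ∑ⱼ ⟨H bⱼ, A bⱼ⟩` and `‖A bⱼ‖ = √λⱼ`, so `⟨H, A⟩ ≤ ‖H‖₂ ‖A‖_*`. The matrix
`G = U sign(Σ) Vᵀ` has spectral norm at most `1`, so `⟨G, Y⟩ ≤ ‖Y‖_*`, while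
`⟨G, X⟩ = ∑ σᵢ = ‖X‖_*`. The last equality holds because, by `tᵏ χ_{AB} = tⁿ χ_{BA}` for
rectangular `A`, `B`, the eigenvalues of `XᵀX = V Σ² Vᵀ` are the `σᵢ²` padded with zeros.
-/

open Matrix

/-- Frobenius inner product. -/
noncomputable def frobInner {m n : ℕ} (A B : Matrix (Fin m) (Fin n) ℝ) : ℝ :=
  ∑ i, ∑ j, A i j * B i j

/-- Nuclear norm: sum of the singular values of `A`. -/
noncomputable def nuclearNorm {m n : ℕ} (A : Matrix (Fin m) (Fin n) ℝ) : ℝ :=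
  ∑ i, Real.sqrt ((Matrix.isHermitian_conjTranspose_mul_self A).eigenvalues i)

open scoped Matrix.Norms.L2Operator InnerProductSpace

namespace Matrix

theorem trace_eq_sum_dotProduct_mulVec {ι : Type*} [Fintype ι] [DecidableEq ι]
    (M : Matrix ι ι ℝ) (b : OrthonormalBasis ι ℝ (EuclideanSpace ℝ ι)) :
    M.trace = ∑ i, (b i).ofLp ⬝ᵥ (M *ᵥ (b i).ofLp) := by
  have h : LinearMap.trace ℝ _ (toLpLin 2 2 M) = M.trace := by
    rw [LinearMap.trace_eq_matrix_trace ℝ (PiLp.basisFun 2 ℝ ι), toLpLin_eq_toLin,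
      LinearMap.toMatrix_toLin]
  rw [← h, LinearMap.trace_eq_sum_inner _ b]
  simp [toLpLin_apply, EuclideanSpace.inner_eq_star_dotProduct, dotProduct_comm]

theorem roots_charpoly_mul_diagonal_mul_transpose {R n k : Type*} [CommRing R] [IsDomain R]
    [Fintype n] [DecidableEq n] [Fintype k] [DecidableEq k]
    (V : Matrix n k R) (hV : Vᵀ * V = 1) (d : k → R) :
    Fintype.card k • {0} + (V * diagonal d * Vᵀ).charpoly.roots
      = Fintype.card n • {0} + Finset.univ.val.map d := by
  have h := charpoly_mul_comm' V (diagonal d * Vᵀ)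
  rw [Matrix.mul_assoc, hV, Matrix.mul_one, ← Matrix.mul_assoc] at h
  have hd : (diagonal d).charpoly
      = ((Finset.univ.val.map d).map fun a => Polynomial.X - Polynomial.C a).prod := by
    rw [charpoly_diagonal, Multiset.map_map]; rfl
  have := congrArg Polynomial.roots h
  rwa [Polynomial.roots_mul ((Polynomial.monic_X_pow _).mul (charpoly_monic _)).ne_zero,
    Polynomial.roots_mul ((Polynomial.monic_X_pow _).mul (charpoly_monic _)).ne_zero,
    Polynomial.roots_X_pow, Polynomial.roots_X_pow, hd,
    Polynomial.roots_multiset_prod_X_sub_C] at this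

theorem transpose_mul_mul_eq_of_transpose_mul_self_eq_one {R l m n p : Type*} [CommSemiring R]
    [Fintype l] [Fintype m] [DecidableEq m] {U : Matrix l m R} (hU : Uᵀ * U = 1)
    (A : Matrix m n R) (B : Matrix m p R) : (U * A)ᵀ * (U * B) = Aᵀ * B := by
  rw [transpose_mul, Matrix.mul_assoc, ← Matrix.mul_assoc Uᵀ, hU, Matrix.one_mul]

theorem l2_opNorm_le_one_of_transpose_mul_self_eq_one {m k : Type*} [Fintype m] [Fintype k]
    [DecidableEq k] {U : Matrix m k ℝ} (hU : Uᵀ * U = 1) : ‖U‖ ≤ 1 := by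
  have h := l2_opNorm_conjTranspose_mul_self U
  rw [conjTranspose_eq_transpose_of_trivial, hU, ← diagonal_one, l2_opNorm_diagonal] at h
  have : ‖fun _ : k => (1 : ℝ)‖ ≤ 1 :=
    (pi_norm_le_iff_of_nonneg zero_le_one).mpr fun _ => by simp
  nlinarith [norm_nonneg U]

theorem l2_opNorm_mul_diagonal_mul_transpose_le {m n k : Type*} [Fintype m] [Fintype n]
    [DecidableEq n] [Fintype k] [DecidableEq k] {U : Matrix m k ℝ} {V : Matrix n k ℝ}
    (hU : Uᵀ * U = 1) (hV : Vᵀ * V = 1) (s : k → ℝ) : ‖U * diagonal s * Vᵀ‖ ≤ ‖s‖ := by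
  have hVt : ‖Vᵀ‖ = ‖V‖ := by
    rw [← conjTranspose_eq_transpose_of_trivial, l2_opNorm_conjTranspose]
  calc ‖U * diagonal s * Vᵀ‖ ≤ ‖U‖ * ‖diagonal s‖ * ‖Vᵀ‖ :=
        (l2_opNorm_mul _ _).trans (by gcongr; exact l2_opNorm_mul _ _)
    _ ≤ 1 * ‖s‖ * 1 := by
        rw [hVt, l2_opNorm_diagonal]
        gcongr
        · exact l2_opNorm_le_one_of_transpose_mul_self_eq_one hU
        · exact l2_opNorm_le_one_of_transpose_mul_self_eq_one hV
    _ = ‖s‖ := by ring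

theorem norm_mulVec_eigenvectorBasis_conjTranspose_mul_self {m n : Type*} [Fintype m]
    [Fintype n] [DecidableEq n] (A : Matrix m n ℝ) (j : n) :
    ‖WithLp.toLp 2 (A *ᵥ ((isHermitian_conjTranspose_mul_self A).eigenvectorBasis j).ofLp)‖
      = √((isHermitian_conjTranspose_mul_self A).eigenvalues j) := by
  rw [← Real.sqrt_sq (norm_nonneg _), ← real_inner_self_eq_norm_sq, IsHermitian.eigenvalues_eq]
  congr 1
  rw [EuclideanSpace.inner_eq_star_dotProduct]
  simp [← mulVec_mulVec, dotProduct_mulVec, vecMul_transpose, dotProduct_comm]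

end Matrix

theorem frobInner_eq_trace {m n : ℕ} (A B : Matrix (Fin m) (Fin n) ℝ) :
    frobInner A B = (Aᵀ * B).trace := by
  rw [frobInner, Finset.sum_comm]
  simp only [trace, diag, mul_apply, transpose_apply]

theorem frobInner_sub_right {m n : ℕ} (A B C : Matrix (Fin m) (Fin n) ℝ) :
    frobInner A (B - C) = frobInner A B - frobInner A C := by
  simp only [frobInner_eq_trace, Matrix.mul_sub, trace_sub]

theorem frobInner_mul_diagonal_mul_transpose {m n k : ℕ} {U : Matrix (Fin m) (Fin k) ℝ}
    {V : Matrix (Fin n) (Fin k) ℝ} (hU : Uᵀ * U = 1) (hV : Vᵀ * V = 1) (a b : Fin k → ℝ) :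
    frobInner (U * diagonal a * Vᵀ) (U * diagonal b * Vᵀ) = ∑ i, a i * b i := by
  rw [frobInner_eq_trace, Matrix.mul_assoc U, Matrix.mul_assoc U,
    transpose_mul_mul_eq_of_transpose_mul_self_eq_one hU, transpose_mul, diagonal_transpose,
    transpose_transpose, trace_mul_comm, Matrix.mul_assoc, ← Matrix.mul_assoc Vᵀ, hV,
    Matrix.one_mul, diagonal_mul_diagonal, trace_diagonal]
  exact Fintype.sum_congr _ _ fun i => mul_comm _ _

theorem nuclearNorm_nonneg {m n : ℕ} (A : Matrix (Fin m) (Fin n) ℝ) : 0 ≤ nuclearNorm A :=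
  Finset.sum_nonneg fun _ _ => Real.sqrt_nonneg _

theorem nuclearNorm_mul_diagonal_mul_transpose {m n k : ℕ} {U : Matrix (Fin m) (Fin k) ℝ}
    {V : Matrix (Fin n) (Fin k) ℝ} (hU : Uᵀ * U = 1) (hV : Vᵀ * V = 1) (σ : Fin k → ℝ) :
    nuclearNorm (U * diagonal σ * Vᵀ) = ∑ i, |σ i| := by
  have hXX : (U * diagonal σ * Vᵀ)ᴴ * (U * diagonal σ * Vᵀ) = V * diagonal (σ ^ 2) * Vᵀ := by
    rw [conjTranspose_eq_transpose_of_trivial, Matrix.mul_assoc U,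
      transpose_mul_mul_eq_of_transpose_mul_self_eq_one hU, transpose_mul, diagonal_transpose,
      transpose_transpose, Matrix.mul_assoc, ← Matrix.mul_assoc (diagonal σ),
      diagonal_mul_diagonal, ← Matrix.mul_assoc, sq]
    rfl
  have h := roots_charpoly_mul_diagonal_mul_transpose V hV (σ ^ 2)
  rw [← hXX, (isHermitian_conjTranspose_mul_self _).roots_charpoly_eq_eigenvalues] at h
  have := congrArg (fun s => (s.map Real.sqrt).sum) h
  simp only [Multiset.map_add, Multiset.map_nsmul, Multiset.map_singleton, Real.sqrt_zero,
    Multiset.sum_add, Multiset.sum_nsmul, Multiset.sum_singleton, smul_zero, zero_add,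
    Multiset.map_map] at this
  simpa [nuclearNorm, Real.sqrt_sq_eq_abs, Finset.sum] using this

theorem frobInner_le_l2_opNorm_mul_nuclearNorm {m n : ℕ} (H A : Matrix (Fin m) (Fin n) ℝ) :
    frobInner H A ≤ ‖H‖ * nuclearNorm A := by
  set hA := isHermitian_conjTranspose_mul_self A
  set b := hA.eigenvectorBasis
  calc frobInner H A
      = ∑ j, ⟪WithLp.toLp 2 (H *ᵥ (b j).ofLp), WithLp.toLp 2 (A *ᵥ (b j).ofLp)⟫_ℝ := by
        rw [frobInner_eq_trace, trace_eq_sum_dotProduct_mulVec _ b]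
        simp [EuclideanSpace.inner_eq_star_dotProduct, ← mulVec_mulVec, dotProduct_mulVec,
          vecMul_transpose, dotProduct_comm]
    _ ≤ ∑ j, ‖H‖ * √(hA.eigenvalues j) := by
        refine Finset.sum_le_sum fun j _ => (real_inner_le_norm _ _).trans ?_
        rw [norm_mulVec_eigenvectorBasis_conjTranspose_mul_self]
        gcongr
        simpa using l2_opNorm_mulVec H (b j)
    _ = ‖H‖ * nuclearNorm A := by rw [nuclearNorm, Finset.mul_sum]

/-- For a compact SVD `X = U Σ Vᵀ`, the matrix `G = U·sign(Σ)·Vᵀ` is a subgradient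
of the nuclear norm at `X`. -/
theorem nuclearNorm_subgradient (m n : ℕ)
    (X : Matrix (Fin m) (Fin n) ℝ)
    (U : Matrix (Fin m) (Fin (min m n)) ℝ)
    (V : Matrix (Fin n) (Fin (min m n)) ℝ)
    (σ : Fin (min m n) → ℝ)
    (hU : Uᵀ * U = 1) (hV : Vᵀ * V = 1)
    (hσ : ∀ i, 0 ≤ σ i)
    (hX : X = U * Matrix.diagonal σ * Vᵀ) :
    ∀ Y : Matrix (Fin m) (Fin n) ℝ,
      nuclearNorm Y ≥ nuclearNorm X +
        frobInner (U * Matrix.diagonal (fun i => if 0 < σ i then (1 : ℝ) else 0) * Vᵀ)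
          (Y - X) := by
  intro Y
  set s : Fin (min m n) → ℝ := fun i => if 0 < σ i then 1 else 0
  set G := U * Matrix.diagonal s * Vᵀ
  have hGX : frobInner G X = nuclearNorm X := by
    rw [hX, frobInner_mul_diagonal_mul_transpose hU hV,
      nuclearNorm_mul_diagonal_mul_transpose hU hV]
    refine Finset.sum_congr rfl fun i _ => ?_
    rcases (hσ i).eq_or_lt with h | h
    · simp [← h]
    · simp [s, h, abs_of_pos h]
  have hs : ‖s‖ ≤ 1 := (pi_norm_le_iff_of_nonneg zero_le_one).mpr fun i => by
    simp only [s]; split_ifs <;> simp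
  have hG : ‖G‖ ≤ 1 := (l2_opNorm_mul_diagonal_mul_transpose_le hU hV s).trans hs
  calc nuclearNorm X + frobInner G (Y - X) = frobInner G Y := by
        rw [frobInner_sub_right, hGX]; ring
    _ ≤ ‖G‖ * nuclearNorm Y := frobInner_le_l2_opNorm_mul_nuclearNorm G Y
    _ ≤ nuclearNorm Y := mul_le_of_le_one_left (nuclearNorm_nonneg Y) hG
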